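/- Let k ≥ 3 and t ≥ ⌊k/2⌋ be integers. Then for every ε > 0, Σ_{1 ≤ q ≤ Q} κ(q)²·Σ_{r | q} r·κ(r)^{2t} ≪_ε Q^ε, uniformly for Q ≥ 1. -/

import Mathlib

/-!
Put `f q = κ(q)² ∑_{r ∣ q} r κ(r)^{2t}`, a nonnegative multiplicative function. Rankin's trick
bounds the sum by `Q^ε ∑_{q ≤ Q} f(q) q^{-ε}`, and the latter by the Euler product
`∏_p ∑_n f(p^n) p^{-nε}`. Measuring the size of `p^n` by the exponent `n / k`, which is monotone
in `n`, one has `p^{n/k+1} κ(p^n)² ≤ k²` for `n ≥ 1` and, since `k ≤ 2t + 1`,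
`p^i κ(p^i)^{2t} ≤ k^{2t} p^{i/k}`. Multiplying over the `n + 1` divisors of `p^n` gives
`f(p^n) ≤ (n + 1) k^{2t+2} / p`, so every Euler factor is `1 + O(p^{-1-ε})` and the product
converges.
-/

open Finset Real

lemma Nat.Coprime.sum_divisors_mul_of_map_mul {R : Type*} [CommSemiring R] {f : ℕ → R}
    (hf : ∀ m n, m.Coprime n → f (m * n) = f m * f n) {m n : ℕ} (hmn : m.Coprime n) :
    ∑ d ∈ (m * n).divisors, f d = (∑ d ∈ m.divisors, f d) * ∑ d ∈ n.divisors, f d := by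
  calc ∑ d ∈ (m * n).divisors, f d = ∑ d ∈ m.divisors ×ˢ n.divisors, f (d.1 * d.2) := by
        rw [hmn.divisors_mul, sum_map]
        exact sum_attach _ fun d : ℕ × ℕ => f (d.1 * d.2)
    _ = ∑ d ∈ m.divisors ×ˢ n.divisors, f d.1 * f d.2 := by
        refine sum_congr rfl fun ⟨a, b⟩ hab => ?_
        simp only [mem_product, Nat.mem_divisors] at hab
        exact hf a b ((hmn.coprime_dvd_left hab.1.1).coprime_dvd_right hab.2.1)
    _ = _ := by rw [sum_mul_sum, sum_product]

lemma kappa_sq_mul_sum_divisors_mul {κ : ℕ → ℝ}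
    (hκmul : ∀ m n, m.Coprime n → κ (m * n) = κ m * κ n) (t : ℕ) {m n : ℕ} (hmn : m.Coprime n) :
    κ (m * n) ^ 2 * ∑ r ∈ (m * n).divisors, (r : ℝ) * κ r ^ (2 * t)
      = (κ m ^ 2 * ∑ r ∈ m.divisors, (r : ℝ) * κ r ^ (2 * t))
        * (κ n ^ 2 * ∑ r ∈ n.divisors, (r : ℝ) * κ r ^ (2 * t)) := by
  rw [hκmul m n hmn, hmn.sum_divisors_mul_of_map_mul (f := fun r : ℕ => (r : ℝ) * κ r ^ (2 * t))
    fun a b hab => by rw [hκmul a b hab, Nat.cast_mul]; ring]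
  ring

lemma kappa_sq_mul_sum_divisors_nonneg (κ : ℕ → ℝ) (t q : ℕ) :
    0 ≤ κ q ^ 2 * ∑ r ∈ q.divisors, (r : ℝ) * κ r ^ (2 * t) :=
  mul_nonneg (sq_nonneg _)
    (sum_nonneg fun r _ => mul_nonneg r.cast_nonneg ((even_two_mul t).pow_nonneg _))

lemma Nat.exists_eq_mul_add_of_pos {n k : ℕ} (hn : 0 < n) (hk : 0 < k) :
    ∃ u v, 1 ≤ v ∧ v ≤ k ∧ n = u * k + v := by
  refine ⟨(n - 1) / k, (n - 1) % k + 1, by omega, Nat.mod_lt _ hk, ?_⟩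
  have := Nat.div_add_mod (n - 1) k
  rw [mul_comm]
  omega

lemma pow_mul_rpow_pow_le_pow {p a : ℝ} (hp : 1 ≤ p) {i j m : ℕ} (h : i + a * j ≤ m) :
    p ^ i * (p ^ a) ^ j ≤ p ^ m := by
  have hp0 : 0 < p := zero_lt_one.trans_le hp
  rw [← rpow_mul_natCast hp0.le, ← rpow_natCast p i, ← rpow_add hp0, ← rpow_natCast p m]
  exact rpow_le_rpow_of_exponent_le hp h

lemma mul_cast_pow_rpow_neg_le {p : ℕ} (hp : 2 ≤ p) {x c ε : ℝ} (hx : 0 ≤ x) (hε : 0 ≤ ε)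
    (hxc : p * x ≤ c) (n : ℕ) :
    x * ((p ^ (n + 1) : ℕ) : ℝ) ^ (-ε) ≤ (p : ℝ) ^ (-(1 + ε)) * (c * ((2 : ℝ) ^ (-ε)) ^ n) := by
  have hp0 : (0 : ℝ) < p := by positivity
  have hc : 0 ≤ c := (mul_nonneg hp0.le hx).trans hxc
  have hpow : ((p ^ (n + 1) : ℕ) : ℝ) ^ (-ε) = (p : ℝ) ^ (-ε) * ((p : ℝ) ^ (-ε)) ^ n := by
    rw [Nat.cast_pow, ← rpow_natCast_mul hp0.le, mul_comm, rpow_mul_natCast hp0.le, pow_succ']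
  have hle : ((p : ℝ) ^ (-ε)) ^ n ≤ ((2 : ℝ) ^ (-ε)) ^ n :=
    pow_le_pow_left₀ (by positivity)
      (rpow_le_rpow_of_nonpos two_pos (by exact_mod_cast hp) (by linarith)) n
  calc x * ((p ^ (n + 1) : ℕ) : ℝ) ^ (-ε)
      = (p * x) * (p : ℝ)⁻¹ * (p : ℝ) ^ (-ε) * ((p : ℝ) ^ (-ε)) ^ n := by
        rw [hpow]; field_simp
    _ ≤ c * (p : ℝ)⁻¹ * (p : ℝ) ^ (-ε) * ((2 : ℝ) ^ (-ε)) ^ n := by gcongr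
    _ = _ := by rw [neg_add, rpow_add hp0, rpow_neg_one]; ring

section PrimePower

variable {k t p : ℕ} {κ : ℕ → ℝ}

lemma pow_mul_kappa_sq_le (hk : 2 ≤ k) (hp : 1 ≤ p)
    (hA : ∀ u : ℕ, κ (p ^ (u * k + 1)) = k * (p : ℝ) ^ (-(u : ℝ) - 1/2))
    (hB : ∀ u v : ℕ, 2 ≤ v → v ≤ k → κ (p ^ (u * k + v)) = (p : ℝ) ^ (-(u : ℝ) - 1))
    {n : ℕ} (hn : 0 < n) :
    (p : ℝ) ^ (n / k + 1) * κ (p ^ n) ^ 2 ≤ (k : ℝ) ^ 2 := by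
  have hp' : (1 : ℝ) ≤ p := by exact_mod_cast hp
  obtain ⟨u, v, hv1, hvk, rfl⟩ := Nat.exists_eq_mul_add_of_pos hn (k := k) (by omega)
  rcases hv1.eq_or_lt with rfl | hv2
  · have hdiv : (u * k + 1) / k = u := by
      rw [Nat.add_comm, Nat.add_mul_div_right _ _ (by omega), Nat.div_eq_of_lt (by omega),
        zero_add]
    rw [hA, hdiv, mul_pow, mul_left_comm]
    calc _ ≤ (k : ℝ) ^ 2 * (p : ℝ) ^ 0 :=
          mul_le_mul_of_nonneg_left (pow_mul_rpow_pow_le_pow hp' (by push_cast; linarith))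
            (by positivity)
      _ = _ := by rw [pow_zero, mul_one]
  · have hdiv : (((u * k + v) / k : ℕ) : ℝ) ≤ u + 1 := by
      exact_mod_cast Nat.div_le_of_le_mul (by nlinarith)
    rw [hB u v hv2 hvk]
    calc _ ≤ (p : ℝ) ^ 0 := pow_mul_rpow_pow_le_pow hp' (by push_cast at hdiv ⊢; linarith)
      _ ≤ _ := by
          rw [pow_zero]
          exact one_le_pow₀ (by exact_mod_cast (by omega : 1 ≤ k))

lemma pow_mul_kappa_pow_le (hk : 2 ≤ k) (hkt : k ≤ 2 * t + 1) (hp : 1 ≤ p) (hκ1 : κ 1 = 1)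
    (hA : ∀ u : ℕ, κ (p ^ (u * k + 1)) = k * (p : ℝ) ^ (-(u : ℝ) - 1/2))
    (hB : ∀ u v : ℕ, 2 ≤ v → v ≤ k → κ (p ^ (u * k + v)) = (p : ℝ) ^ (-(u : ℝ) - 1))
    (i : ℕ) :
    (p : ℝ) ^ i * κ (p ^ i) ^ (2 * t) ≤ (k : ℝ) ^ (2 * t) * (p : ℝ) ^ (i / k) := by
  have hp' : (1 : ℝ) ≤ p := by exact_mod_cast hp
  have hkpow : (1 : ℝ) ≤ (k : ℝ) ^ (2 * t) := one_le_pow₀ (by exact_mod_cast (by omega : 1 ≤ k))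
  rcases i.eq_zero_or_pos with rfl | hi
  · simpa [hκ1] using hkpow
  obtain ⟨u, v, hv1, hvk, rfl⟩ := Nat.exists_eq_mul_add_of_pos hi (k := k) (by omega)
  have huk : ((u * k : ℕ) : ℝ) ≤ u * (2 * t + 1) := by exact_mod_cast Nat.mul_le_mul_left u hkt
  have hk0 : 0 < k := by omega
  rcases hv1.eq_or_lt with rfl | hv2
  · have hdiv : (u * k + 1) / k = u := by
      rw [Nat.add_comm, Nat.add_mul_div_right _ _ hk0, Nat.div_eq_of_lt (by omega), zero_add]
    have ht : (1 : ℝ) ≤ t := by exact_mod_cast (by omega : 1 ≤ t)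
    rw [hA, hdiv, mul_pow, mul_left_comm]
    exact mul_le_mul_of_nonneg_left
      (pow_mul_rpow_pow_le_pow hp' (by push_cast at huk ⊢; nlinarith)) (by positivity)
  · have hexp : ((u * k + v : ℕ) : ℝ) + (-(u : ℝ) - 1) * (2 * t : ℕ) ≤ ((u * k + v) / k : ℕ) := by
      rcases hvk.lt_or_eq with hvk | rfl
      · rw [Nat.add_comm, Nat.add_mul_div_right _ _ hk0, Nat.div_eq_of_lt hvk, zero_add]
        have hv : (v : ℝ) ≤ 2 * t := by exact_mod_cast (by omega : v ≤ 2 * t)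
        push_cast at huk ⊢
        nlinarith
      · rw [← Nat.succ_mul, Nat.mul_div_cancel _ hk0]
        have hv : (v : ℝ) ≤ 2 * t + 1 := by exact_mod_cast hkt
        push_cast at huk ⊢
        nlinarith
    rw [hB u v hv2 hvk]
    exact (pow_mul_rpow_pow_le_pow hp' hexp).trans (le_mul_of_one_le_left (by positivity) hkpow)

lemma prime_mul_kappa_sq_mul_sum_divisors_le (hk : 2 ≤ k) (hkt : k ≤ 2 * t + 1) (hp : p.Prime)
    (hκ1 : κ 1 = 1)
    (hA : ∀ u : ℕ, κ (p ^ (u * k + 1)) = k * (p : ℝ) ^ (-(u : ℝ) - 1/2))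
    (hB : ∀ u v : ℕ, 2 ≤ v → v ≤ k → κ (p ^ (u * k + v)) = (p : ℝ) ^ (-(u : ℝ) - 1))
    {n : ℕ} (hn : 0 < n) :
    p * (κ (p ^ n) ^ 2 * ∑ r ∈ (p ^ n).divisors, (r : ℝ) * κ r ^ (2 * t))
      ≤ (n + 1) * (k : ℝ) ^ (2 * t + 2) := by
  have hp' : (1 : ℝ) ≤ p := by exact_mod_cast hp.one_lt.le
  rw [Nat.sum_divisors_prime_pow hp, mul_sum, mul_sum]
  calc _ ≤ ∑ _i ∈ range (n + 1), (k : ℝ) ^ (2 * t + 2) := sum_le_sum fun i hi => ?_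
    _ = _ := by simp
  have hmono : (p : ℝ) ^ (i / k) ≤ (p : ℝ) ^ (n / k) :=
    pow_le_pow_right₀ hp' (Nat.div_le_div_right (mem_range_succ_iff.1 hi))
  calc (p : ℝ) * (κ (p ^ n) ^ 2 * (((p ^ i : ℕ) : ℝ) * κ (p ^ i) ^ (2 * t)))
      = κ (p ^ n) ^ 2 * p * ((p : ℝ) ^ i * κ (p ^ i) ^ (2 * t)) := by push_cast; ring
    _ ≤ κ (p ^ n) ^ 2 * p * ((k : ℝ) ^ (2 * t) * (p : ℝ) ^ (n / k)) := by
        refine mul_le_mul_of_nonneg_left ?_ (by positivity)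
        exact (pow_mul_kappa_pow_le hk hkt hp.one_lt.le hκ1 hA hB i).trans (by gcongr)
    _ = (k : ℝ) ^ (2 * t) * ((p : ℝ) ^ (n / k + 1) * κ (p ^ n) ^ 2) := by ring
    _ ≤ (k : ℝ) ^ (2 * t) * (k : ℝ) ^ 2 := by
        gcongr
        exact pow_mul_kappa_sq_le hk hp.one_lt.le hA hB hn
    _ = _ := by ring

lemma kappa_sq_mul_sum_divisors_mul_rpow_neg_le (hk : 2 ≤ k) (hkt : k ≤ 2 * t + 1)
    (hp : p.Prime) (hκ1 : κ 1 = 1)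
    (hA : ∀ u : ℕ, κ (p ^ (u * k + 1)) = k * (p : ℝ) ^ (-(u : ℝ) - 1/2))
    (hB : ∀ u v : ℕ, 2 ≤ v → v ≤ k → κ (p ^ (u * k + v)) = (p : ℝ) ^ (-(u : ℝ) - 1))
    {ε : ℝ} (hε : 0 ≤ ε) (n : ℕ) :
    κ (p ^ (n + 1)) ^ 2 * (∑ r ∈ (p ^ (n + 1)).divisors, (r : ℝ) * κ r ^ (2 * t))
        * ((p ^ (n + 1) : ℕ) : ℝ) ^ (-ε)
      ≤ (p : ℝ) ^ (-(1 + ε))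
        * ((k : ℝ) ^ (2 * t + 2) * (((n : ℝ) + 2) * ((2 : ℝ) ^ (-ε)) ^ n)) := by
  refine (mul_cast_pow_rpow_neg_le (c := ((n : ℝ) + 2) * (k : ℝ) ^ (2 * t + 2)) hp.two_le
    (kappa_sq_mul_sum_divisors_nonneg κ t _) hε ?_ n).trans_eq (by ring)
  calc _ ≤ ((n + 1 : ℕ) + 1) * (k : ℝ) ^ (2 * t + 2) :=
        prime_mul_kappa_sq_mul_sum_divisors_le hk hkt hp hκ1 hA hB n.succ_pos
    _ = ((n : ℝ) + 2) * (k : ℝ) ^ (2 * t + 2) := by push_cast; ring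

end PrimePower

lemma summable_and_tsum_le_of_succ_le {a g : ℕ → ℝ} {c : ℝ} (ha : ∀ n, 0 ≤ a n)
    (hg : Summable g) (hag : ∀ n, a (n + 1) ≤ c * g n) :
    Summable a ∧ ∑' n, a n ≤ a 0 + c * ∑' n, g n := by
  have hsum : Summable (fun n => a (n + 1)) :=
    (hg.mul_left c).of_nonneg_of_le (fun n => ha _) hag
  have hsum' : Summable a := (summable_nat_add_iff 1).1 hsum
  refine ⟨hsum', ?_⟩
  rw [hsum'.tsum_eq_zero_add, ← tsum_mul_left]
  exact add_le_add_right (hsum.tsum_le_tsum hag (hg.mul_left c)) _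

lemma exists_sum_Icc_le_of_prime_pow_le {F g : ℕ → ℝ} {s : ℝ} (hs : 1 < s) (hF1 : F 1 = 1)
    (hFmul : ∀ m n, m.Coprime n → F (m * n) = F m * F n) (hF0 : ∀ n, 0 ≤ F n)
    (hg : Summable g) (hFg : ∀ p, p.Prime → ∀ n, F (p ^ (n + 1)) ≤ (p : ℝ) ^ (-s) * g n) :
    ∃ B, ∀ N, ∑ q ∈ Icc 1 N, F q ≤ B := by
  have hloc : ∀ p, p.Prime → Summable (fun n => F (p ^ n)) ∧
      ∑' n, F (p ^ n) ≤ 1 + (p : ℝ) ^ (-s) * ∑' n, g n := fun p hp => by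
    simpa only [pow_zero, hF1] using summable_and_tsum_le_of_succ_le (fun n => hF0 _) hg (hFg p hp)
  have hg0 : 0 ≤ ∑' n, g n := by
    refine tsum_nonneg fun n =>
      nonneg_of_mul_nonneg_right ((hF0 _).trans (hFg 2 Nat.prime_two n)) ?_
    positivity
  refine ⟨exp ((∑' n, g n) * ∑' n : ℕ, (n : ℝ) ^ (-s)), fun N => ?_⟩
  obtain ⟨-, hprod⟩ := EulerProduct.summable_and_hasSum_smoothNumbers_prod_primesBelow_tsum hF1
    (fun {m n} h => hFmul m n h)
    (fun hp => by simpa only [Real.norm_eq_abs] using (hloc _ hp).1.abs) (N + 1)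
  have hsmooth : ∀ q ∈ Icc 1 N, q ∈ (N + 1).smoothNumbers := fun q hq => by
    rw [mem_Icc] at hq
    exact Nat.mem_smoothNumbers_of_lt (by omega) (by omega)
  calc ∑ q ∈ Icc 1 N, F q = ∑ q ∈ (Icc 1 N).subtype (· ∈ (N + 1).smoothNumbers), F q :=
        (sum_subtype_of_mem F hsmooth).symm
    _ ≤ ∑' q : (N + 1).smoothNumbers, F q :=
        hprod.summable.sum_le_tsum _ fun q _ => hF0 q
    _ = ∏ p ∈ (N + 1).primesBelow, ∑' n, F (p ^ n) := hprod.tsum_eq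
    _ ≤ ∏ p ∈ (N + 1).primesBelow, exp ((∑' n, g n) * (p : ℝ) ^ (-s)) := by
        refine prod_le_prod (fun p _ => tsum_nonneg fun n => hF0 _) fun p hp => ?_
        exact (hloc p (Nat.prime_of_mem_primesBelow hp)).2.trans
          (by rw [add_comm, mul_comm]; exact add_one_le_exp _)
    _ = exp ((∑' n, g n) * ∑ p ∈ (N + 1).primesBelow, (p : ℝ) ^ (-s)) := by
        rw [← exp_sum, mul_sum]
    _ ≤ _ := by
        gcongr
        exact (summable_nat_rpow.2 (by linarith)).sum_le_tsum _ fun n _ => by positivity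

lemma sum_Icc_floor_le_rpow_mul_sum {f : ℕ → ℝ} (hf : ∀ q, 0 ≤ f q) {ε Q : ℝ} (hε : 0 ≤ ε)
    (hQ : 0 ≤ Q) :
    ∑ q ∈ Icc 1 ⌊Q⌋₊, f q ≤ Q ^ ε * ∑ q ∈ Icc 1 ⌊Q⌋₊, f q * (q : ℝ) ^ (-ε) := by
  rw [mul_sum]
  refine sum_le_sum fun q hq => ?_
  rw [mem_Icc] at hq
  have hq0 : (0 : ℝ) < q := by exact_mod_cast hq.1
  calc f q = (q : ℝ) ^ ε * (f q * (q : ℝ) ^ (-ε)) := by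
        rw [rpow_neg hq0.le, mul_left_comm, mul_inv_cancel₀ (rpow_pos_of_pos hq0 ε).ne', mul_one]
    _ ≤ _ := by
        gcongr
        · exact mul_nonneg (hf q) (by positivity)
        · exact (Nat.le_floor_iff hQ).1 hq.2

lemma summable_natCast_add_mul_geometric {r : ℝ} (hr0 : 0 ≤ r) (hr1 : r < 1) (a : ℝ) :
    Summable (fun n : ℕ => ((n : ℝ) + a) * r ^ n) := by
  have hn : Summable (fun n : ℕ => (n : ℝ) ^ 1 * r ^ n) :=
    summable_pow_mul_geometric_of_norm_lt_one 1 (by rwa [norm_of_nonneg hr0])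
  simpa only [pow_one, add_mul] using hn.add ((summable_geometric_of_lt_one hr0 hr1).mul_left a)

/-- Let `k ≥ 3` and `t ≥ ⌊k/2⌋` be integers. Then for every `ε > 0`,
`Σ_{1 ≤ q ≤ Q} κ(q)²·Σ_{r | q} r·κ(r)^{2t} ≪_ε Q^ε`, uniformly for `Q ≥ 1`. -/
theorem stmt14 (k t : ℕ) (hk : 3 ≤ k) (ht : k / 2 ≤ t) (κ : ℕ → ℝ)
    (hκ1 : κ 1 = 1)
    (hκmul : ∀ m n : ℕ, Nat.Coprime m n → κ (m * n) = κ m * κ n)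
    (hκA : ∀ p : ℕ, p.Prime → ∀ u : ℕ,
      κ (p ^ (u * k + 1)) = (k : ℝ) * (p : ℝ) ^ (-(u : ℝ) - 1/2))
    (hκB : ∀ p : ℕ, p.Prime → ∀ u v : ℕ, 2 ≤ v → v ≤ k →
      κ (p ^ (u * k + v)) = (p : ℝ) ^ (-(u : ℝ) - 1))
    (ε : ℝ) (hε : 0 < ε) :
    ∃ C : ℝ, 0 < C ∧ ∀ Q : ℝ, 1 ≤ Q →
      ∑ q ∈ Finset.Icc 1 ⌊Q⌋₊,
        κ q ^ 2 * ∑ r ∈ q.divisors, (r : ℝ) * κ r ^ (2 * t)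
      ≤ C * Q ^ ε := by
  set f : ℕ → ℝ := fun q => κ q ^ 2 * ∑ r ∈ q.divisors, (r : ℝ) * κ r ^ (2 * t)
  have hFmul : ∀ m n, m.Coprime n →
      f (m * n) * ((m * n : ℕ) : ℝ) ^ (-ε) = f m * (m : ℝ) ^ (-ε) * (f n * (n : ℝ) ^ (-ε)) :=
    fun m n hmn => by
      rw [show f (m * n) = f m * f n from kappa_sq_mul_sum_divisors_mul hκmul t hmn,
        Nat.cast_mul, mul_rpow m.cast_nonneg n.cast_nonneg]
      ring
  have hg : Summable fun n : ℕ => (k : ℝ) ^ (2 * t + 2) * (((n : ℝ) + 2) * ((2 : ℝ) ^ (-ε)) ^ n) :=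
    (summable_natCast_add_mul_geometric (by positivity)
      (rpow_lt_one_of_one_lt_of_neg one_lt_two (by linarith)) 2).mul_left _
  obtain ⟨B, hB⟩ := exists_sum_Icc_le_of_prime_pow_le
    (F := fun q => f q * (q : ℝ) ^ (-ε)) (s := 1 + ε) (by linarith)
    (by simp [f, hκ1]) hFmul
    (fun q => mul_nonneg (kappa_sq_mul_sum_divisors_nonneg κ t q) (by positivity)) hg
    (fun p hp => kappa_sq_mul_sum_divisors_mul_rpow_neg_le (by omega) (by omega) hp hκ1
      (hκA p hp) (hκB p hp) hε.le)
  refine ⟨max B 1, by positivity, fun Q hQ => ?_⟩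
  calc _ ≤ Q ^ ε * ∑ q ∈ Icc 1 ⌊Q⌋₊, f q * (q : ℝ) ^ (-ε) :=
        sum_Icc_floor_le_rpow_mul_sum (kappa_sq_mul_sum_divisors_nonneg κ t) hε.le (by linarith)
    _ ≤ Q ^ ε * max B 1 := by gcongr; exact (hB _).trans (le_max_left _ _)
    _ = _ := mul_comm _ _
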